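/- Let J^i_j : U → ℝ (1 ≤ i, j ≤ 6) be differentiable functions with J^1_1 = 0, and let b, c : U → ℝ be differentiable. Suppose the identity b·c·Σ_{k,s} g^{ks} J^l_s ∂g^{ij}/∂u^k - b²·Σ_k g^{kl} ∂g^{ij}/∂u^k + c·Σ_{k,s} (∂b/∂u^k) g^{ks} J^l_s g^{ij} - b·Σ_k (∂b/∂u^k) g^{kl} g^{ij} = 0 holds on U for the index choices (i, j, l) = (1, 1, 1) and (i, j, l) = (2, 2, 1). Then b ≡ 0 on U. -/

import Mathlib

/-!
Only `u¹`-derivatives of `g^{11}` and `g^{22}` survive, and `J^1_1 = 0` kills the `b c` term of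
both identities. What remains of the `(2,2,1)` identity is `g^{22}` times the `(1,1,1)` identity
plus `-b² ∂g^{22}/∂u¹ = 2 b² cos u¹ / sin³ u¹`. Hence `b = 0` wherever `cos u¹ ≠ 0`, and by
continuity of `b` along the `u¹`-line also on the hyperplane `u¹ = π/2`.
-/

open Real

noncomputable section

/-- The `k`-th partial derivative of a function `f : ℝ⁶ → ℝ` at a point `x`. -/
def pder {n : ℕ} (k : Fin n) (f : (Fin n → ℝ) → ℝ) (x : Fin n → ℝ) : ℝ :=
  fderiv ℝ f x (Pi.single k 1)

/-- The spherical coordinates domain `U = (0,π)⁵ × (0,2π) ⊆ ℝ⁶`. -/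
def sphDomain : Set (Fin 6 → ℝ) :=
  {x | (∀ i : Fin 6, (i : ℕ) < 5 → x i ∈ Set.Ioo 0 π) ∧ x 5 ∈ Set.Ioo 0 (2 * π)}

/-- The components `g^{ij}` of the inverse round metric of `S⁶` in spherical coordinates
(indices `0,…,5` correspond to `1,…,6`): `g^{ij} = 0` for `i ≠ j` and
`g^{ii} = 1/(sin²(u¹)⋯sin²(u^{i-1}))`. -/
def ginv (i j : Fin 6) (x : Fin 6 → ℝ) : ℝ :=
  if i = j then (∏ m ∈ Finset.univ.filter (fun m : Fin 6 => m < i), Real.sin (x m) ^ 2)⁻¹ else 0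

open Filter Topology

lemma ginv_of_ne {i j : Fin 6} (h : i ≠ j) (x : Fin 6 → ℝ) : ginv i j x = 0 := if_neg h

lemma ginv_zero_zero : ginv 0 0 = fun _ => 1 := by
  funext x
  simp [ginv, Finset.filter_false_of_mem]

lemma ginv_one_one : ginv 1 1 = fun x => (sin (x 0) ^ 2)⁻¹ := by
  funext x
  have h : Finset.univ.filter (fun m : Fin 6 => m < 1) = {0} := by decide
  rw [ginv, if_pos rfl, h, Finset.prod_singleton]

lemma pder_const {n : ℕ} (k : Fin n) (a : ℝ) (x : Fin n → ℝ) : pder k (fun _ => a) x = 0 := by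
  simp [pder]

lemma pder_comp_apply {n : ℕ} {f : ℝ → ℝ} {f' : ℝ} {x : Fin n → ℝ} {j : Fin n}
    (hf : HasDerivAt f f' (x j)) (k : Fin n) :
    pder k (fun y => f (y j)) x = if k = j then f' else 0 := by
  have hcomp : HasFDerivAt (fun y => f (y j)) (f' • ContinuousLinearMap.proj j) x :=
    hf.comp_hasFDerivAt x (hasFDerivAt_apply (𝕜 := ℝ) j x)
  rw [pder, hcomp.fderiv]
  simp [Pi.single_apply, eq_comm]

lemma pder_ginv_one_one {x : Fin 6 → ℝ} (hx : sin (x 0) ≠ 0) (k : Fin 6) :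
    pder k (ginv 1 1) x = if k = 0 then -2 * cos (x 0) / sin (x 0) ^ 3 else 0 := by
  have hderiv : HasDerivAt (fun t => (sin t ^ 2)⁻¹) (-2 * cos (x 0) / sin (x 0) ^ 3) (x 0) := by
    refine (((hasDerivAt_sin (x 0)).pow 2).inv (pow_ne_zero 2 hx)).congr_deriv ?_
    simp only [Pi.pow_apply]
    field_simp
    ring
  rw [ginv_one_one]
  exact pder_comp_apply hderiv k

lemma sin_pos_of_mem_sphDomain {x : Fin 6 → ℝ} (hx : x ∈ sphDomain) : 0 < sin (x 0) :=
  sin_pos_of_pos_of_lt_pi (hx.1 0 (by norm_num)).1 (hx.1 0 (by norm_num)).2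

lemma update_zero_mem_sphDomain {x : Fin 6 → ℝ} (hx : x ∈ sphDomain) {t : ℝ}
    (ht : t ∈ Set.Ioo 0 π) : Function.update x 0 t ∈ sphDomain := by
  refine ⟨fun i hi => ?_, by simpa using hx.2⟩
  rcases eq_or_ne i 0 with rfl | h
  · simpa using ht
  · simpa [h] using hx.1 i hi

lemma cos_ne_zero_of_mem_Ioo {t : ℝ} (ht : t ∈ Set.Ioo 0 π) (h : t ≠ π / 2) : cos t ≠ 0 := by
  rw [← cos_pi_div_two]
  exact fun heq => h (injOn_cos (Set.Ioo_subset_Icc_self ht)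
    ⟨by positivity, by linarith [pi_pos]⟩ heq)

lemma eventually_ne_nhdsNE {X : Type*} [TopologicalSpace X] [T1Space X] (a b : X) :
    ∀ᶠ x in 𝓝[≠] a, x ≠ b := by
  rcases eq_or_ne a b with rfl | h
  · exact eventually_mem_nhdsWithin
  · exact eventually_ne_nhdsWithin h

lemma eq_zero_of_continuousAt_of_cos_ne_zero {f : (Fin 6 → ℝ) → ℝ} {x : Fin 6 → ℝ}
    (hx : x ∈ sphDomain) (hf : ContinuousAt f x)
    (h : ∀ y ∈ sphDomain, cos (y 0) ≠ 0 → f y = 0) : f x = 0 := by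
  have hx0 : x 0 ∈ Set.Ioo 0 π := hx.1 0 (by norm_num)
  set φ : ℝ → ℝ := fun t => f (Function.update x 0 t)
  have hφ : ContinuousAt φ (x 0) :=
    hf.comp_of_eq (by fun_prop) (Function.update_eq_self 0 x)
  have hφ_zero : φ =ᶠ[𝓝[≠] x 0] fun _ => 0 := by
    filter_upwards [nhdsWithin_le_nhds (Ioo_mem_nhds hx0.1 hx0.2),
      eventually_ne_nhdsNE (x 0) (π / 2)] with t ht hne
    exact h _ (update_zero_mem_sphDomain hx ht) (by simpa using cos_ne_zero_of_mem_Ioo ht hne)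
  simpa [φ] using
    ((hφ.eventuallyEq_nhds_iff_eventuallyEq_nhdsNE continuousAt_const).1 hφ_zero).eq_of_nhds

def integrabilityLhs (J : Fin 6 → Fin 6 → (Fin 6 → ℝ) → ℝ) (b c : (Fin 6 → ℝ) → ℝ)
    (i j l : Fin 6) (x : Fin 6 → ℝ) : ℝ :=
  b x * c x * (∑ k : Fin 6, ∑ s : Fin 6, ginv k s x * J l s x * pder k (ginv i j) x)
    - (b x) ^ 2 * (∑ k : Fin 6, ginv k l x * pder k (ginv i j) x)
    + c x * (∑ k : Fin 6, ∑ s : Fin 6, pder k b x * ginv k s x * J l s x * ginv i j x)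
    - b x * (∑ k : Fin 6, pder k b x * ginv k l x * ginv i j x)

lemma integrabilityLhs_one_one_zero {J : Fin 6 → Fin 6 → (Fin 6 → ℝ) → ℝ}
    {b c : (Fin 6 → ℝ) → ℝ} {x : Fin 6 → ℝ} (hJ : J 0 0 x = 0) (hx : sin (x 0) ≠ 0) :
    integrabilityLhs J b c 1 1 0 x =
      ginv 1 1 x * integrabilityLhs J b c 0 0 0 x + 2 * b x ^ 2 * cos (x 0) / sin (x 0) ^ 3 := by
  simp only [integrabilityLhs, Fin.sum_univ_six, pder_ginv_one_one hx, ginv_zero_zero,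
    pder_const, hJ]
  simp only [mul_zero, ↓reduceIte, Fin.isValue, neg_mul, zero_mul, ne_eq, zero_ne_one,
    not_false_eq_true, ginv_of_ne, add_zero, Fin.reduceEq, one_ne_zero, one_mul, zero_sub, mul_one,
    zero_add, sub_self]
  ring

theorem b_vanishes_general (J : Fin 6 → Fin 6 → (Fin 6 → ℝ) → ℝ)
    (hJ11 : ∀ x ∈ sphDomain, J 0 0 x = 0)
    (b c : (Fin 6 → ℝ) → ℝ)
    (hb : ∀ x ∈ sphDomain, DifferentiableAt ℝ b x)
    (hid : ∀ i j l : Fin 6, ((i, j, l) = (0, 0, 0) ∨ (i, j, l) = (1, 1, 0)) →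
      ∀ x ∈ sphDomain,
        b x * c x * (∑ k : Fin 6, ∑ s : Fin 6, ginv k s x * J l s x * pder k (ginv i j) x)
        - (b x) ^ 2 * (∑ k : Fin 6, ginv k l x * pder k (ginv i j) x)
        + c x * (∑ k : Fin 6, ∑ s : Fin 6, pder k b x * ginv k s x * J l s x * ginv i j x)
        - b x * (∑ k : Fin 6, pder k b x * ginv k l x * ginv i j x) = 0) :
    ∀ x ∈ sphDomain, b x = 0 := by
  intro x hx
  refine eq_zero_of_continuousAt_of_cos_ne_zero hx (hb x hx).continuousAt fun y hy hcos => ?_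
  have hsin := (sin_pos_of_mem_sphDomain hy).ne'
  have h := integrabilityLhs_one_one_zero (b := b) (c := c) (hJ11 y hy) hsin
  have h₀ : integrabilityLhs J b c 0 0 0 y = 0 := hid 0 0 0 (Or.inl rfl) y hy
  have h₁ : integrabilityLhs J b c 1 1 0 y = 0 := hid 1 1 0 (Or.inr rfl) y hy
  rw [h₀, h₁] at h
  field_simp at h
  simpa [hcos] using h

/-- If the symmetrised integrability identity of Theorem 3.1 holds on `U` for the index
choices `(i,j,l) = (1,1,1)` and `(2,2,1)` (here `0`-indexed: `(0,0,0)` and `(1,1,0)`),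
then `b ≡ 0` on `U`. -/
theorem b_vanishes (J : Fin 6 → Fin 6 → (Fin 6 → ℝ) → ℝ)
    (hJdiff : ∀ i j : Fin 6, ∀ x ∈ sphDomain, DifferentiableAt ℝ (J i j) x)
    (hJ11 : ∀ x ∈ sphDomain, J 0 0 x = 0)
    (b c : (Fin 6 → ℝ) → ℝ)
    (hb : ∀ x ∈ sphDomain, DifferentiableAt ℝ b x)
    (hc : ∀ x ∈ sphDomain, DifferentiableAt ℝ c x)
    (hid : ∀ i j l : Fin 6, ((i, j, l) = (0, 0, 0) ∨ (i, j, l) = (1, 1, 0)) →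
      ∀ x ∈ sphDomain,
        b x * c x * (∑ k : Fin 6, ∑ s : Fin 6, ginv k s x * J l s x * pder k (ginv i j) x)
        - (b x) ^ 2 * (∑ k : Fin 6, ginv k l x * pder k (ginv i j) x)
        + c x * (∑ k : Fin 6, ∑ s : Fin 6, pder k b x * ginv k s x * J l s x * ginv i j x)
        - b x * (∑ k : Fin 6, pder k b x * ginv k l x * ginv i j x) = 0) :
    ∀ x ∈ sphDomain, b x = 0 :=
  b_vanishes_general J hJ11 b c hb hid

end
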